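/- arXiv:math/0408139 — 2 statements merged into one kernel-verified Lean document; each statement's English description precedes it below -/
import Mathlib

section
/- Let p be an odd prime, m > 1, and χ a primitive multiplicative character mod p^m. For a unit u ∈ (ℤ/p^mℤ)^×, Σ_{x ∈ ℤ/p^mℤ} χ(u + x²) = χ(u) χ_{1/2}(u)^m α̃(χ,m), where α̃(χ,m) = Σ_{x} χ(1 + x²) and χ_{1/2} is the Legendre symbol mod p. -/
/-- A multiplicative character mod `p^m` is primitive if it is not induced by a
character mod `p^n` for any `n < m`. -/
def MulPrimitive (p m : ℕ) (χ : MulChar (ZMod (p ^ m)) ℂ) : Prop :=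
  ∀ n : ℕ, ∀ hn : n < m, ∀ χ₁ : MulChar (ZMod (p ^ n)) ℂ,
    ∃ a : ZMod (p ^ m), χ a ≠ χ₁ (ZMod.castHom (pow_dvd_pow p hn.le) (ZMod (p ^ n)) a)

namespace CharSumAux

open Finset

variable (p m : ℕ) [hp : Fact p.Prime]

/-- reduction mod `p` -/
noncomputable def pr (hm : 2 ≤ m) : ZMod (p ^ m) →+* ZMod p :=
  ZMod.castHom (dvd_pow_self p (by omega : m ≠ 0)) (ZMod p)

variable {p m}

lemma cast_pm_pow_zero (k : ℕ) (hk : m ≤ k) : ((p : ZMod (p ^ m)))^k = 0 := by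
  have : ((p : ZMod (p ^ m)))^m = 0 := by
    rw [← Nat.cast_pow, ZMod.natCast_self]
  calc ((p : ZMod (p ^ m)))^k = ((p : ZMod (p ^ m)))^m * ((p : ZMod (p ^ m)))^(k-m) := by
        rw [← pow_add]; congr 1; omega
    _ = 0 := by rw [this, zero_mul]

variable (hm : 2 ≤ m)

lemma pr_apply (z : ZMod (p ^ m)) : pr p m hm z = ((z.val : ℕ) : ZMod p) := by
  rw [pr, ZMod.castHom_apply, ← ZMod.natCast_val]

lemma pr_eq_zero_iff (z : ZMod (p ^ m)) : pr p m hm z = 0 ↔ p ∣ z.val := by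
  rw [pr_apply, ZMod.natCast_eq_zero_iff]

lemma isUnit_val_iff {k : ℕ} (hk : 1 ≤ k) (z : ZMod (p ^ k)) : IsUnit z ↔ ¬ p ∣ z.val := by
  have h1 : IsUnit z ↔ IsUnit ((z.val : ℕ) : ZMod (p ^ k)) := by rw [ZMod.natCast_zmod_val]
  rw [h1, ZMod.isUnit_iff_coprime, Nat.coprime_pow_right_iff (by omega), Nat.coprime_comm]
  exact hp.out.coprime_iff_not_dvd

lemma isUnit_iff (z : ZMod (p ^ m)) : IsUnit z ↔ pr p m hm z ≠ 0 := by
  rw [isUnit_val_iff (by omega : 1 ≤ m), Ne, pr_eq_zero_iff]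

lemma card_dvd_filter (j : ℕ) (hj : j ≤ m) :
    ((Finset.univ : Finset (ZMod (p ^ m))).filter (fun x => p ^ j ∣ x.val)).card = p ^ (m - j) := by
  have hpj : 0 < p ^ j := pow_pos hp.out.pos j
  have hsplit : p ^ m = p ^ (m - j) * p ^ j := by rw [← pow_add]; congr 1; omega
  rw [← Finset.card_range (p ^ (m - j))]
  refine Finset.card_nbij' (fun x => x.val / p ^ j) (fun i => ((p ^ j * i : ℕ) : ZMod (p ^ m)))
    ?_ ?_ ?_ ?_
  · intro x hx
    simp only [Finset.mem_coe, Finset.mem_filter, Finset.mem_univ, true_and] at hx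
    rw [Finset.mem_coe, Finset.mem_range, Nat.div_lt_iff_lt_mul hpj, ← hsplit]
    exact ZMod.val_lt x
  · intro i hi
    simp only [Finset.mem_coe, Finset.mem_filter, Finset.mem_univ, true_and]
    rw [ZMod.val_natCast]
    exact (Nat.dvd_mod_iff ⟨p ^ (m - j), by rw [hsplit, mul_comm]⟩).mpr ⟨i, rfl⟩
  · intro x hx
    simp only [Finset.mem_coe, Finset.mem_filter, Finset.mem_univ, true_and] at hx
    dsimp only
    rw [Nat.mul_div_cancel' hx, ZMod.natCast_zmod_val]
  · intro i hi
    rw [Finset.mem_coe, Finset.mem_range] at hi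
    dsimp only
    have hlt : p ^ j * i < p ^ m := by
      calc p ^ j * i < p ^ j * p ^ (m - j) := by
            exact mul_lt_mul_of_pos_left hi hpj
        _ = p ^ m := by rw [hsplit, mul_comm]
    rw [ZMod.val_natCast, Nat.mod_eq_of_lt hlt, Nat.mul_div_cancel_left _ hpj]

lemma card_fiber_pr (t : ZMod p) :
    ((Finset.univ : Finset (ZMod (p ^ m))).filter (fun x => pr p m hm x = t)).card = p ^ (m - 1) := by
  have h0 : ((Finset.univ : Finset (ZMod (p ^ m))).filter (fun x => pr p m hm x = 0)).card
      = p ^ (m - 1) := by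
    have : ((Finset.univ : Finset (ZMod (p ^ m))).filter (fun x => pr p m hm x = 0))
        = ((Finset.univ : Finset (ZMod (p ^ m))).filter (fun x => p ^ 1 ∣ x.val)) := by
      apply Finset.filter_congr
      intro x _
      rw [pow_one]
      exact iff_of_eq (congrArg _ rfl) |>.trans (pr_eq_zero_iff hm x)
    rw [this, card_dvd_filter 1 (by omega)]
  rw [← h0]
  have hprt : pr p m hm ((t.val : ℕ) : ZMod (p ^ m)) = t := by
    rw [map_natCast, ZMod.natCast_zmod_val]
  refine Finset.card_nbij' (fun x => x - ((t.val : ℕ) : ZMod (p ^ m)))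
    (fun x => x + ((t.val : ℕ) : ZMod (p ^ m))) ?_ ?_ ?_ ?_
  · intro x hx
    simp only [Finset.mem_coe, Finset.mem_filter, Finset.mem_univ, true_and] at hx ⊢
    rw [map_sub, hx, hprt, sub_self]
  · intro x hx
    simp only [Finset.mem_coe, Finset.mem_filter, Finset.mem_univ, true_and] at hx ⊢
    rw [map_add, hx, hprt, zero_add]
  · intro x _; ring
  · intro x _; ring

/-- sum over fibers of reduction mod p -/
lemma sum_pr (F : ZMod p → ℂ) :
    ∑ x : ZMod (p ^ m), F (pr p m hm x) = (p : ℂ)^(m-1) * ∑ t : ZMod p, F t := by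
  classical
  have hinner : ∀ t : ZMod p,
      ∑ x ∈ (Finset.univ : Finset (ZMod (p ^ m))).filter (fun x => pr p m hm x = t),
        F (pr p m hm x) = (p : ℂ)^(m-1) * F t := by
    intro t
    have hc : ∀ x ∈ (Finset.univ : Finset (ZMod (p ^ m))).filter (fun x => pr p m hm x = t),
        F (pr p m hm x) = F t := by
      intro x hx; simp only [Finset.mem_filter] at hx; rw [hx.2]
    rw [Finset.sum_congr rfl hc, Finset.sum_const, card_fiber_pr hm t, nsmul_eq_mul]
    push_cast; ring
  rw [← Finset.sum_fiberwise_of_maps_to (fun x _ => Finset.mem_univ (pr p m hm x))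
    (fun x => F (pr p m hm x)), Finset.sum_congr rfl (fun t _ => hinner t), Finset.mul_sum]

include hm in
lemma mul_p_eq_zero_iff (w : ZMod (p ^ m)) : (p : ZMod (p ^ m)) * w = 0 ↔ p ^ (m - 1) ∣ w.val := by
  have hm2 : 2 ≤ m := hm
  have h1 : (p : ZMod (p ^ m)) * w = ((p * w.val : ℕ) : ZMod (p ^ m)) := by
    conv_lhs => rw [← ZMod.natCast_zmod_val w]
    push_cast; ring
  rw [h1, ZMod.natCast_eq_zero_iff]
  have hsplit : p ^ m = p * p ^ (m - 1) := by
    rw [← pow_succ']; congr 1; omega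
  have hgen : ∀ n : ℕ, (p ^ m ∣ p * n ↔ p ^ (m - 1) ∣ n) := by
    intro n
    rw [hsplit, Nat.mul_dvd_mul_iff_left hp.out.pos]
  exact hgen w.val

include hm in
lemma card_fiber_pmul (x : ZMod (p ^ m)) (hx : p ∣ x.val) :
    ((Finset.univ : Finset (ZMod (p ^ m))).filter (fun w => (p : ZMod (p ^ m)) * w = x)).card
      = p := by
  have h0 : ((Finset.univ : Finset (ZMod (p ^ m))).filter
      (fun w => (p : ZMod (p ^ m)) * w = 0)).card = p := by
    have : ((Finset.univ : Finset (ZMod (p ^ m))).filter (fun w => (p : ZMod (p ^ m)) * w = 0))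
        = ((Finset.univ : Finset (ZMod (p ^ m))).filter (fun w => p ^ (m - 1) ∣ w.val)) := by
      apply Finset.filter_congr
      intro w _
      exact (mul_p_eq_zero_iff hm w)
    rw [this, card_dvd_filter (m - 1) (by omega)]
    have h1 : m - (m - 1) = 1 := by omega
    rw [h1, pow_one]
  refine Eq.trans ?_ h0
  set w₀ : ZMod (p ^ m) := ((x.val / p : ℕ) : ZMod (p ^ m)) with hw₀
  have hpw₀ : (p : ZMod (p ^ m)) * w₀ = x := by
    rw [hw₀, ← Nat.cast_mul, Nat.mul_div_cancel' hx, ZMod.natCast_zmod_val]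
  refine Finset.card_nbij' (fun w => w - w₀) (fun w => w + w₀) ?_ ?_ ?_ ?_
  · intro w hw
    simp only [Finset.mem_coe, Finset.mem_filter, Finset.mem_univ, true_and] at hw ⊢
    rw [mul_sub, hw, hpw₀, sub_self]
  · intro w hw
    simp only [Finset.mem_coe, Finset.mem_filter, Finset.mem_univ, true_and] at hw ⊢
    rw [mul_add, hw, hpw₀, zero_add]
  · intro w _; ring
  · intro w _; ring

include hm in
lemma sum_pmul (f : ZMod (p ^ m) → ℂ) :
    ∑ w : ZMod (p ^ m), f ((p : ZMod (p ^ m)) * w) =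
      (p : ℂ) * ∑ x ∈ (Finset.univ : Finset (ZMod (p ^ m))).filter (fun x => p ∣ x.val), f x := by
  classical
  have hmaps : ∀ w : ZMod (p ^ m), w ∈ (Finset.univ : Finset (ZMod (p ^ m))) →
      (p : ZMod (p ^ m)) * w ∈
        (Finset.univ : Finset (ZMod (p ^ m))).filter (fun x => p ∣ x.val) := by
    intro w _
    simp only [Finset.mem_filter, Finset.mem_univ, true_and]
    have h1 : (p : ZMod (p ^ m)) * w = ((p * w.val : ℕ) : ZMod (p ^ m)) := by
      conv_lhs => rw [← ZMod.natCast_zmod_val w]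
      push_cast; ring
    rw [h1, ZMod.val_natCast]
    exact (Nat.dvd_mod_iff (dvd_pow_self p (by omega : m ≠ 0))).mpr ⟨w.val, rfl⟩
  have hinner : ∀ x ∈ (Finset.univ : Finset (ZMod (p ^ m))).filter (fun x => p ∣ x.val),
      ∑ w ∈ (Finset.univ : Finset (ZMod (p ^ m))).filter (fun w => (p : ZMod (p ^ m)) * w = x),
        f ((p : ZMod (p ^ m)) * w) = (p : ℂ) * f x := by
    intro x hx
    simp only [Finset.mem_filter, Finset.mem_univ, true_and] at hx
    have hc : ∀ w ∈ (Finset.univ : Finset (ZMod (p ^ m))).filter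
        (fun w => (p : ZMod (p ^ m)) * w = x), f ((p : ZMod (p ^ m)) * w) = f x := by
      intro w hw; simp only [Finset.mem_filter] at hw; rw [hw.2]
    rw [Finset.sum_congr rfl hc, Finset.sum_const, card_fiber_pmul hm x hx, nsmul_eq_mul]
  rw [← Finset.sum_fiberwise_of_maps_to hmaps (fun w => f ((p : ZMod (p ^ m)) * w)),
    Finset.sum_congr rfl hinner, Finset.mul_sum]

variable (χ : MulChar (ZMod (p ^ m)) ℂ)

include hm in
lemma pm1_mul_natCast (a : ℕ) :
    ((p : ZMod (p ^ m)))^(m-1) * (a : ZMod (p ^ m)) =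
      ((p : ZMod (p ^ m)))^(m-1) * ((a % p : ℕ) : ZMod (p ^ m)) := by
  have h0 : ((p : ZMod (p ^ m)))^(m-1) * (p : ZMod (p ^ m)) = 0 := by
    have h1 : ((p : ZMod (p ^ m)))^(m-1) * (p : ZMod (p ^ m)) = ((p : ZMod (p ^ m)))^m := by
      rw [← pow_succ]; congr 1; omega
    rw [h1, cast_pm_pow_zero m le_rfl]
  conv_lhs => rw [← Nat.div_add_mod a p]
  push_cast
  linear_combination ((a / p : ℕ) : ZMod (p ^ m)) * h0

include hm in
lemma e_mul (s t : ZMod (p ^ m)) :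
    (1 + (p : ZMod (p ^ m))^(m-1) * s) * (1 + (p : ZMod (p ^ m))^(m-1) * t) =
      1 + (p : ZMod (p ^ m))^(m-1) * (s + t) := by
  have hP2 : ((p : ZMod (p ^ m)))^(m-1) * ((p : ZMod (p ^ m)))^(m-1) = 0 := by
    rw [← pow_add]; exact cast_pm_pow_zero _ (by omega)
  linear_combination (s * t) * hP2

/-- The additive character `t ↦ χ(1 + p^(m-1) t)` of `ZMod p`. -/
noncomputable def psi (hm' : 2 ≤ m) (χ' : MulChar (ZMod (p ^ m)) ℂ) : AddChar (ZMod p) ℂ where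
  toFun t := χ' (1 + (p : ZMod (p ^ m))^(m-1) * ((t.val : ℕ) : ZMod (p ^ m)))
  map_zero_eq_one' := by
    haveI : NeZero p := ⟨hp.out.ne_zero⟩
    simp only [ZMod.val_zero, Nat.cast_zero, mul_zero, add_zero, map_one]
  map_add_eq_mul' := by
    intro a b
    haveI : NeZero p := ⟨hp.out.ne_zero⟩
    rw [ZMod.val_add, ← pm1_mul_natCast hm']
    push_cast
    rw [mul_add, ← add_assoc]
    rw [show (1 : ZMod (p ^ m)) + (p : ZMod (p ^ m))^(m-1) * ((a.val : ℕ) : ZMod (p ^ m))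
        + (p : ZMod (p ^ m))^(m-1) * ((b.val : ℕ) : ZMod (p ^ m)) =
        1 + (p : ZMod (p ^ m))^(m-1) * (((a.val : ℕ) : ZMod (p ^ m))
          + ((b.val : ℕ) : ZMod (p ^ m))) from by ring, ← e_mul hm', map_mul]

lemma psi_apply (t : ZMod p) :
    psi hm χ t = χ (1 + (p : ZMod (p ^ m))^(m-1) * ((t.val : ℕ) : ZMod (p ^ m))) := rfl

lemma chi_one_add (t : ZMod (p ^ m)) :
    χ (1 + (p : ZMod (p ^ m))^(m-1) * t) = psi hm χ (pr p m hm t) := by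
  haveI : NeZero p := ⟨hp.out.ne_zero⟩
  show _ = χ (1 + (p : ZMod (p ^ m))^(m-1) * (((pr p m hm t).val : ℕ) : ZMod (p ^ m)))
  rw [pr_apply, ZMod.val_natCast, ← pm1_mul_natCast hm]
  rw [ZMod.natCast_zmod_val]

lemma psi_ne_zero (hχ : MulPrimitive p m χ) : psi hm χ ≠ 0 := by
  intro h0
  have htriv : ∀ t : ZMod (p ^ m), χ (1 + (p : ZMod (p ^ m))^(m-1) * t) = 1 := by
    intro t
    rw [chi_one_add hm χ t, h0, AddChar.zero_apply]
  haveI : NeZero (p ^ (m-1)) := ⟨pow_ne_zero _ hp.out.ne_zero⟩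
  have d : p ^ (m-1) ∣ p ^ m := pow_dvd_pow p (by omega)
  have hsurj : Function.Surjective (ZMod.unitsMap d) := ZMod.unitsMap_surjective d
  set g : (ZMod (p ^ m))ˣ →* ℂˣ := MulChar.equivToUnitHom χ with hg
  have hker : (ZMod.unitsMap d).ker ≤ g.ker := by
    intro uu huu
    rw [MonoidHom.mem_ker] at huu ⊢
    have h1 : ZMod.castHom d (ZMod (p ^ (m-1))) ((uu : ZMod (p ^ m)) - 1) = 0 := by
      rw [map_sub, map_one]
      have h1a : (ZMod.castHom d (ZMod (p ^ (m-1)))) (uu : ZMod (p ^ m))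
          = ((ZMod.unitsMap d uu : ZMod (p ^ (m-1)))) := rfl
      rw [h1a, huu, Units.val_one, sub_self]
    have h2 : p ^ (m-1) ∣ ((uu : ZMod (p ^ m)) - 1).val := by
      rwa [ZMod.castHom_apply, ← ZMod.natCast_val, ZMod.natCast_eq_zero_iff] at h1
    obtain ⟨c, hc⟩ := h2
    have h4 : (uu : ZMod (p ^ m)) = 1 + (p : ZMod (p ^ m))^(m-1) * (c : ZMod (p ^ m)) := by
      have h3 : ((uu : ZMod (p ^ m)) - 1) = (p : ZMod (p ^ m))^(m-1) * (c : ZMod (p ^ m)) := by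
        conv_lhs => rw [← ZMod.natCast_zmod_val ((uu : ZMod (p ^ m)) - 1)]
        rw [hc]; push_cast; ring
      linear_combination h3
    apply Units.ext
    rw [Units.val_one, hg, MulChar.coe_equivToUnitHom, h4, htriv]
  set g1 : (ZMod (p ^ (m-1)))ˣ →* ℂˣ :=
    (MonoidHom.liftOfSurjective (ZMod.unitsMap d) hsurj) ⟨g, hker⟩ with hg1
  set χ₁ : MulChar (ZMod (p ^ (m-1))) ℂ := MulChar.ofUnitHom g1 with hχ₁
  obtain ⟨a, ha⟩ := hχ (m-1) (by omega) χ₁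
  apply ha
  by_cases hu : IsUnit a
  · obtain ⟨uu, rfl⟩ := hu
    have hcast : (ZMod.castHom (pow_dvd_pow p (by omega : m - 1 ≤ m)) (ZMod (p ^ (m-1))))
        (uu : ZMod (p ^ m)) = ((ZMod.unitsMap d uu : ZMod (p ^ (m-1)))) := rfl
    rw [hcast, hχ₁, MulChar.ofUnitHom_coe, hg1]
    have hl := MonoidHom.liftOfRightInverse_comp_apply (ZMod.unitsMap d)
      (Function.surjInv hsurj) (Function.rightInverse_surjInv hsurj) ⟨g, hker⟩ uu
    rw [hl]
    exact (MulChar.coe_equivToUnitHom χ uu).symm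
  · have hdvd : p ∣ a.val := by
      by_contra hnd
      exact hu ((isUnit_val_iff (by omega : 1 ≤ m) a).mpr hnd)
    have hnu : ¬ IsUnit ((ZMod.castHom (pow_dvd_pow p (by omega : m - 1 ≤ m))
        (ZMod (p ^ (m-1)))) a) := by
      rw [isUnit_val_iff (by omega : 1 ≤ m - 1)]
      push_neg
      rw [ZMod.castHom_apply, ← ZMod.natCast_val, ZMod.val_natCast]
      exact (Nat.dvd_mod_iff (dvd_pow_self p (by omega : m - 1 ≠ 0))).mpr hdvd
    rw [MulChar.map_nonunit χ hu, MulChar.map_nonunit χ₁ hnu]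

lemma sum_psi_mul {ψ : AddChar (ZMod p) ℂ} (hψ : ψ ≠ 0) (s : ZMod p) :
    ∑ y : ZMod p, ψ (s * y) = if s = 0 then (p : ℂ) else 0 := by
  by_cases hs : s = 0
  · simp only [hs, zero_mul, AddChar.map_zero_eq_one, if_true, eq_self_iff_true, Finset.sum_const,
      Finset.card_univ, ZMod.card, nsmul_eq_mul, mul_one]
  · rw [if_neg hs]
    have hb : ∑ y : ZMod p, ψ (s * y) = ∑ y : ZMod p, ψ y :=
      Fintype.sum_bijective (fun y => s * y) (mulLeft_bijective₀ s hs) _ _ (fun y => rfl)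
    rw [hb]
    exact AddChar.sum_eq_zero_iff_ne_zero.mpr hψ

lemma step (hψ : psi hm χ ≠ 0) (hodd : p ≠ 2) (v : ZMod (p ^ m)) (hv : IsUnit v)
    (c : ZMod (p ^ m)) (k : ℕ) (hk : 2*k + 2 ≤ m) :
    ∑ w : ZMod (p ^ m), χ (c + (p : ZMod (p ^ m))^(2*k+2) * v * w^2) =
      (p : ℂ) * ∑ x : ZMod (p ^ m), χ (c + (p : ZMod (p ^ m))^(2*k) * v * x^2) := by
  haveI : NeZero p := ⟨hp.out.ne_zero⟩
  have hpC : (p : ℂ) ≠ 0 := by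
    exact_mod_cast Nat.cast_ne_zero.mpr hp.out.ne_zero
  have h2p : ((2:ℕ) : ZMod p) ≠ 0 := by
    rw [Ne, ZMod.natCast_eq_zero_iff]
    intro hdvd
    have := Nat.le_of_dvd (by norm_num) hdvd
    have := hp.out.two_le
    omega
  set P : ZMod (p ^ m) := (p : ZMod (p ^ m)) with hP
  set g : ZMod (p ^ m) → ℂ := fun x => χ (c + P^(2*k) * v * x^2) with hgdef
  set δ : ZMod (p ^ m) := P^(m-1-2*k) with hδ
  have h1 : P^(2*k) * δ = P^(m-1) := by rw [hδ, ← pow_add]; congr 1; omega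
  have h2 : P^(2*k) * (δ * δ) = 0 := by
    rw [hδ, ← pow_add, ← pow_add]
    exact cast_pm_pow_zero _ (by omega)
  have harg : ∀ (x : ZMod (p ^ m)) (y : ZMod p),
      c + P^(2*k) * v * (x + δ * ((y.val : ℕ) : ZMod (p^m)))^2
        = (c + P^(2*k) * v * x^2) + P^(m-1) * (2 * v * x * ((y.val : ℕ) : ZMod (p^m))) := by
    intro x y
    linear_combination (2 * v * x * ((y.val : ℕ) : ZMod (p^m))) * h1
      + (v * ((y.val : ℕ) : ZMod (p^m))^2) * h2
  have key : ∀ x : ZMod (p ^ m),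
      ∑ y : ZMod p, g (x + δ * ((y.val : ℕ) : ZMod (p^m))) =
        if p ∣ x.val then (p : ℂ) * g x else 0 := by
    intro x
    by_cases hC : IsUnit (c + P^(2*k) * v * x^2)
    · obtain ⟨Cu, hCu⟩ := hC
      set C' : ZMod (p^m) := ((Cu⁻¹ : (ZMod (p^m))ˣ) : ZMod (p^m)) with hC'
      have hCinv : (c + P^(2*k) * v * x^2) * C' = 1 := by
        rw [hC', ← hCu, ← Units.val_mul, mul_inv_cancel, Units.val_one]
      have hterm : ∀ y : ZMod p, g (x + δ * ((y.val : ℕ) : ZMod (p^m))) =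
          g x * psi hm χ (pr p m hm (2 * v * x * C') * y) := by
        intro y
        show χ _ = χ _ * _
        rw [harg x y]
        have hsplit : (c + P^(2*k) * v * x^2) + P^(m-1) * (2 * v * x * ((y.val:ℕ):ZMod (p^m)))
            = (c + P^(2*k) * v * x^2)
              * (1 + P^(m-1) * (2 * v * x * C' * ((y.val:ℕ):ZMod (p^m)))) := by
          linear_combination (-(P^(m-1)) * (2 * v * x * ((y.val:ℕ):ZMod (p^m)))) * hCinv
        rw [hsplit, map_mul, chi_one_add hm χ]
        congr 2
        rw [map_mul]
        congr 1
        rw [map_natCast, ZMod.natCast_zmod_val]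
      rw [Finset.sum_congr rfl (fun y _ => hterm y), ← Finset.mul_sum, sum_psi_mul hψ]
      have hprC' : pr p m hm C' ≠ 0 := (isUnit_iff hm C').mp (Units.isUnit Cu⁻¹)
      have hpr2 : pr p m hm 2 ≠ 0 := by
        have h22 : pr p m hm 2 = ((2:ℕ) : ZMod p) := by
          rw [show ((2 : ZMod (p^m))) = ((2:ℕ) : ZMod (p^m)) by push_cast; rfl, map_natCast]
        rw [h22]
        exact h2p
      have hprv : pr p m hm v ≠ 0 := (isUnit_iff hm v).mp hv
      by_cases hx : p ∣ x.val
      · have hx0 : pr p m hm x = 0 := (pr_eq_zero_iff hm x).mpr hx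
        have : pr p m hm (2 * v * x * C') = 0 := by
          rw [map_mul, map_mul, map_mul, hx0]
          ring
        rw [if_pos hx, this, if_pos rfl]
        ring
      · have hne : pr p m hm (2*v*x*C') ≠ 0 := by
          have hprx : pr p m hm x ≠ 0 := fun h => hx ((pr_eq_zero_iff hm x).mp h)
          rw [map_mul, map_mul, map_mul]
          exact mul_ne_zero (mul_ne_zero (mul_ne_zero hpr2 hprv) hprx) hprC'
        rw [if_neg hne, if_neg hx, mul_zero]
    · have hC0 : pr p m hm (c + P^(2*k) * v * x^2) = 0 := by
        by_contra h
        exact hC ((isUnit_iff hm _).mpr h)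
      have hgx : g x = 0 := MulChar.map_nonunit χ hC
      have hterm : ∀ y : ZMod p, g (x + δ * ((y.val : ℕ) : ZMod (p^m))) = 0 := by
        intro y
        apply MulChar.map_nonunit
        intro hUnit
        have hz : pr p m hm (c + P^(2*k) * v * (x + δ * ((y.val:ℕ):ZMod (p^m)))^2) = 0 := by
          rw [harg x y, map_add, hC0, zero_add, map_mul]
          have hPm : pr p m hm (P^(m-1)) = 0 := by
            rw [map_pow, map_natCast, ZMod.natCast_self, zero_pow (by omega : m - 1 ≠ 0)]
          rw [hPm, zero_mul]
        exact ((isUnit_iff hm _).mp hUnit) hz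
      rw [Finset.sum_congr rfl (fun y _ => hterm y), Finset.sum_const_zero, hgx]
      split_ifs <;> simp
  have htot : (p:ℂ) * ∑ x : ZMod (p^m), g x =
      (p:ℂ) * ∑ x ∈ (Finset.univ : Finset (ZMod (p^m))).filter (fun x => p ∣ x.val), g x := by
    calc (p:ℂ) * ∑ x : ZMod (p^m), g x
        = ∑ _y : ZMod p, ∑ x : ZMod (p^m), g x := by
          rw [Finset.sum_const, Finset.card_univ, ZMod.card, nsmul_eq_mul]
      _ = ∑ y : ZMod p, ∑ x : ZMod (p^m), g (x + δ * ((y.val:ℕ):ZMod (p^m))) := by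
          refine Finset.sum_congr rfl fun y _ => ?_
          exact (Equiv.sum_comp (Equiv.addRight (δ * ((y.val:ℕ):ZMod (p^m)))) g).symm
      _ = ∑ x : ZMod (p^m), ∑ y : ZMod p, g (x + δ * ((y.val:ℕ):ZMod (p^m))) :=
          Finset.sum_comm
      _ = ∑ x : ZMod (p^m), (if p ∣ x.val then (p:ℂ) * g x else 0) :=
          Finset.sum_congr rfl fun x _ => key x
      _ = ∑ x ∈ (Finset.univ : Finset (ZMod (p^m))).filter (fun x => p ∣ x.val), (p:ℂ) * g x :=
          (Finset.sum_filter _ _).symm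
      _ = (p:ℂ) * ∑ x ∈ (Finset.univ : Finset (ZMod (p^m))).filter (fun x => p ∣ x.val), g x := by
          rw [Finset.mul_sum]
  have hS : ∑ x ∈ (Finset.univ : Finset (ZMod (p^m))).filter (fun x => p ∣ x.val), g x
      = ∑ x : ZMod (p^m), g x := (mul_left_cancel₀ hpC htot).symm
  have hL : ∑ w : ZMod (p ^ m), χ (c + P^(2*k+2) * v * w^2)
      = ∑ w : ZMod (p ^ m), g (P * w) := by
    refine Finset.sum_congr rfl fun w _ => ?_
    show χ _ = χ _
    congr 1
    ring
  rw [hL, sum_pmul hm g, hS]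

lemma gauss_twist {ψ : AddChar (ZMod p) ℂ} (hψ : ψ ≠ 0) (hodd : p ≠ 2) (a : ZMod p) (ha : a ≠ 0) :
    ∑ t : ZMod p, ψ (a * t^2) = ((quadraticChar (ZMod p) a : ℤ) : ℂ) * ∑ t : ZMod p, ψ (t^2) := by
  classical
  have hchar : ringChar (ZMod p) ≠ 2 := by
    rw [ZMod.ringChar_zmod_n]; exact hodd
  have hcard : ∀ s : ZMod p,
      ((((Finset.univ : Finset (ZMod p)).filter (fun t => t^2 = s)).card : ℂ))
        = ((quadraticChar (ZMod p) s : ℤ) : ℂ) + 1 := by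
    intro s
    have h := quadraticChar_card_sqrts hchar s
    have hset : ({x : ZMod p | x ^ 2 = s}.toFinset)
        = ((Finset.univ : Finset (ZMod p)).filter (fun t => t^2 = s)) := by
      ext t; simp [Set.mem_toFinset]
    rw [hset] at h
    exact_mod_cast congrArg (Int.cast : ℤ → ℂ) h
  have heval : ∀ b : ZMod p, b ≠ 0 → ∑ t : ZMod p, ψ (b * t^2)
      = ((quadraticChar (ZMod p) b⁻¹ : ℤ) : ℂ)
        * ∑ s : ZMod p, ((quadraticChar (ZMod p) s : ℤ):ℂ) * ψ s := by
    intro b hb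
    have hfib : ∑ t : ZMod p, ψ (b * t^2)
        = ∑ s : ZMod p,
            ((((Finset.univ : Finset (ZMod p)).filter (fun t : ZMod p => t^2 = s)).card : ℂ))
              * ψ (b * s) := by
      rw [← Finset.sum_fiberwise_of_maps_to (fun t _ => Finset.mem_univ (t^2))
        (fun t => ψ (b * t^2))]
      refine Finset.sum_congr rfl fun s _ => ?_
      have hc : ∀ t ∈ (Finset.univ : Finset (ZMod p)).filter (fun t : ZMod p => t^2 = s),
          ψ (b * t^2) = ψ (b * s) := by
        intro t ht; simp only [Finset.mem_filter] at ht; rw [ht.2]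
      rw [Finset.sum_congr rfl hc, Finset.sum_const, nsmul_eq_mul]
    rw [hfib]
    have hsp : ∀ s : ZMod p,
        ((((Finset.univ : Finset (ZMod p)).filter (fun t : ZMod p => t^2 = s)).card : ℂ))
            * ψ (b * s)
          = ((quadraticChar (ZMod p) s : ℤ):ℂ) * ψ (b * s) + ψ (b * s) := by
      intro s; rw [hcard s]; ring
    rw [Finset.sum_congr rfl (fun s _ => hsp s), Finset.sum_add_distrib]
    have hzero : ∑ s : ZMod p, ψ (b * s) = 0 := by
      have hb2 : ∑ s : ZMod p, ψ (b * s) = ∑ s : ZMod p, ψ s :=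
        Fintype.sum_bijective (fun s => b * s) (mulLeft_bijective₀ b hb) _ _ (fun s => rfl)
      rw [hb2]; exact AddChar.sum_eq_zero_iff_ne_zero.mpr hψ
    rw [hzero, add_zero]
    have hre : ∑ s : ZMod p, ((quadraticChar (ZMod p) s : ℤ):ℂ) * ψ (b * s)
        = ∑ s : ZMod p, ((quadraticChar (ZMod p) (b⁻¹ * s) : ℤ):ℂ) * ψ s := by
      refine Fintype.sum_bijective (fun s => b * s) (mulLeft_bijective₀ b hb) _ _ (fun s => ?_)
      rw [inv_mul_cancel_left₀ hb]
    rw [hre]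
    have hQm : ∀ s : ZMod p, ((quadraticChar (ZMod p) (b⁻¹ * s) : ℤ):ℂ) * ψ s
        = ((quadraticChar (ZMod p) b⁻¹ : ℤ):ℂ) * (((quadraticChar (ZMod p) s : ℤ):ℂ) * ψ s) := by
      intro s; rw [map_mul]; push_cast; ring
    rw [Finset.sum_congr rfl (fun s _ => hQm s), ← Finset.mul_sum]
  have h1 := heval a ha
  have h2 := heval 1 one_ne_zero
  simp only [one_mul, inv_one, map_one, Int.cast_one] at h2
  have hQQ : quadraticChar (ZMod p) a⁻¹ = quadraticChar (ZMod p) a := by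
    have h3 : quadraticChar (ZMod p) a * quadraticChar (ZMod p) a⁻¹ = 1 := by
      rw [← map_mul, mul_inv_cancel₀ ha, map_one]
    have h4 : quadraticChar (ZMod p) a * quadraticChar (ZMod p) a = 1 := by
      rw [← pow_two]; exact quadraticChar_sq_one ha
    have hQa : quadraticChar (ZMod p) a ≠ 0 := by
      intro h; rw [h, mul_zero] at h4; exact one_ne_zero h4.symm
    exact mul_left_cancel₀ hQa (h3.trans h4.symm)
  rw [h1, hQQ, ← h2]

include hm in
lemma key (hχ : MulPrimitive p m χ) (hodd : p ≠ 2) (w : (ZMod (p ^ m))ˣ) :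
    (p : ℂ)^(m/2) * ∑ x : ZMod (p ^ m), χ ((w : ZMod (p ^ m)) + x^2) =
      χ w * ∑ x : ZMod (p ^ m),
        χ (1 + (p : ZMod (p ^ m))^(2*(m/2)) * ((w⁻¹ : (ZMod (p ^ m))ˣ) : ZMod (p ^ m)) * x^2) := by
  have hψ := psi_ne_zero hm χ hχ
  set P : ZMod (p^m) := (p : ZMod (p^m)) with hP
  set v : ZMod (p^m) := ((w⁻¹ : (ZMod (p ^ m))ˣ) : ZMod (p ^ m)) with hv
  have hvu : IsUnit v := Units.isUnit w⁻¹
  have hww : (w : ZMod (p^m)) * v = 1 := by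
    rw [hv, ← Units.val_mul, mul_inv_cancel, Units.val_one]
  set K := m / 2 with hK
  have hK1 : 1 ≤ K := by omega
  have hK2 : 2*K ≤ m := by omega
  have hstep0 := step hm χ hψ hodd 1 isUnit_one ((w : ZMod (p^m))) 0 (by omega)
  have hstep0' : ∑ y : ZMod (p^m), χ ((w : ZMod (p^m)) + P^2 * y^2)
      = (p:ℂ) * ∑ x : ZMod (p^m), χ ((w : ZMod (p^m)) + x^2) := by
    calc ∑ y : ZMod (p^m), χ ((w : ZMod (p^m)) + P^2*y^2)
        = ∑ y : ZMod (p^m), χ ((w : ZMod (p^m)) + P^(2*0+2) * 1 * y^2) := by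
          refine Finset.sum_congr rfl fun y _ => ?_; norm_num
      _ = (p:ℂ) * ∑ x : ZMod (p^m), χ ((w : ZMod (p^m)) + P^(2*0)*1*x^2) := hstep0
      _ = (p:ℂ) * ∑ x : ZMod (p^m), χ ((w : ZMod (p^m)) + x^2) := by
          congr 1; refine Finset.sum_congr rfl fun x _ => ?_; norm_num
  have chain : ∀ k : ℕ, 1 ≤ k → 2*k ≤ m →
      ∑ x : ZMod (p^m), χ (1 + P^(2*k) * v * x^2)
        = (p:ℂ)^(k-1) * ∑ x : ZMod (p^m), χ (1 + P^(2*1) * v * x^2) := by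
    intro k
    induction k with
    | zero => intro h1 _; exact absurd h1 (by omega)
    | succ n ih =>
      intro h1 h2
      by_cases hn : n = 0
      · subst hn; simp
      · have hn1 : 1 ≤ n := by omega
        have hn2 : 2*n + 2 ≤ m := by omega
        have hstep := step hm χ hψ hodd v hvu 1 n hn2
        have he : 2*(n+1) = 2*n+2 := by ring
        have hn' : n - 1 + 1 = n := by omega
        rw [he, hstep, ih hn1 (by omega), ← mul_assoc, ← pow_succ', hn']
        norm_num
  have hfac : ∀ y : ZMod (p^m),
      χ ((w : ZMod (p^m)) + P^2 * y^2) = χ w * χ (1 + P^(2*1) * v * y^2) := by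
    intro y
    rw [← map_mul]
    congr 1
    linear_combination (-(P^(2*1)) * y^2) * hww
  have hKK : K - 1 + 1 = K := by omega
  calc (p:ℂ)^K * ∑ x : ZMod (p^m), χ ((w : ZMod (p^m)) + x^2)
      = (p:ℂ)^(K-1) * ((p:ℂ) * ∑ x : ZMod (p^m), χ ((w : ZMod (p^m)) + x^2)) := by
        rw [← mul_assoc, ← pow_succ, hKK]
    _ = (p:ℂ)^(K-1) * ∑ y : ZMod (p^m), χ ((w : ZMod (p^m)) + P^2*y^2) := by
        rw [hstep0']
    _ = (p:ℂ)^(K-1) * ∑ y : ZMod (p^m), (χ w * χ (1 + P^(2*1) * v * y^2)) := by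
        congr 1; exact Finset.sum_congr rfl fun y _ => hfac y
    _ = χ w * ((p:ℂ)^(K-1) * ∑ y : ZMod (p^m), χ (1 + P^(2*1)*v*y^2)) := by
        rw [← Finset.mul_sum]; ring
    _ = χ w * ∑ x : ZMod (p^m), χ (1 + P^(2*K) * v * x^2) := by
        rw [← chain K hK1 hK2]

include hm in
lemma main (hχ : MulPrimitive p m χ) (hodd : p ≠ 2) (w : (ZMod (p ^ m))ˣ) :
    ∑ x : ZMod (p ^ m), χ ((w : ZMod (p ^ m)) + x^2) =
      χ w * ((quadraticChar (ZMod p) (pr p m hm (w : ZMod (p ^ m))) : ℤ) : ℂ)^m *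
        ∑ x : ZMod (p ^ m), χ (1 + x^2) := by
  have hψ := psi_ne_zero hm χ hχ
  have hpC : (p:ℂ) ≠ 0 := by exact_mod_cast Nat.cast_ne_zero.mpr hp.out.ne_zero
  have hpK : (p:ℂ)^(m/2) ≠ 0 := pow_ne_zero _ hpC
  have ha0 : pr p m hm (w : ZMod (p ^ m)) ≠ 0 := (isUnit_iff hm _).mp (Units.isUnit w)
  have hQsq : (quadraticChar (ZMod p) (pr p m hm (w : ZMod (p ^ m))))^2 = 1 :=
    quadraticChar_sq_one ha0
  have hww : (w : ZMod (p^m)) * ((w⁻¹ : (ZMod (p ^ m))ˣ) : ZMod (p ^ m)) = 1 := by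
    rw [← Units.val_mul, mul_inv_cancel, Units.val_one]
  have hprv : pr p m hm (w : ZMod (p ^ m))
      * pr p m hm ((w⁻¹ : (ZMod (p ^ m))ˣ) : ZMod (p ^ m)) = 1 := by
    rw [← map_mul, hww, map_one]
  have hQv : quadraticChar (ZMod p) (pr p m hm ((w⁻¹ : (ZMod (p ^ m))ˣ) : ZMod (p ^ m)))
      = quadraticChar (ZMod p) (pr p m hm (w : ZMod (p ^ m))) := by
    have h3 : quadraticChar (ZMod p) (pr p m hm (w : ZMod (p ^ m)))
        * quadraticChar (ZMod p) (pr p m hm ((w⁻¹ : (ZMod (p ^ m))ˣ) : ZMod (p ^ m))) = 1 := by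
      rw [← map_mul, hprv, map_one]
    have h4 : quadraticChar (ZMod p) (pr p m hm (w : ZMod (p ^ m)))
        * quadraticChar (ZMod p) (pr p m hm (w : ZMod (p ^ m))) = 1 := by
      rw [← pow_two]; exact hQsq
    have hQa : quadraticChar (ZMod p) (pr p m hm (w : ZMod (p ^ m))) ≠ 0 := by
      intro h; rw [h, mul_zero] at h4; exact one_ne_zero h4.symm
    exact mul_left_cancel₀ hQa (h3.trans h4.symm)
  have hkeyw := key hm χ hχ hodd w
  have hkey1 := key hm χ hχ hodd 1
  simp only [Units.val_one, inv_one, MulChar.map_one, one_mul] at hkey1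
  by_cases hpar : m % 2 = 0
  · -- even case
    have hm2K : m = 2*(m/2) := by omega
    have hsum : ∀ u : ZMod (p^m),
        ∑ x : ZMod (p^m), χ (1 + (p : ZMod (p ^ m))^(2*(m/2)) * u * x^2) = ((p:ℂ))^m := by
      intro u
      have hz : ((p : ZMod (p ^ m)))^(2*(m/2)) = 0 := cast_pm_pow_zero _ (by omega)
      have hone : ∀ x : ZMod (p^m), χ (1 + (p : ZMod (p ^ m))^(2*(m/2)) * u * x^2) = 1 := by
        intro x; rw [hz, zero_mul, zero_mul, add_zero, map_one]
      rw [Finset.sum_congr rfl (fun x _ => hone x), Finset.sum_const, Finset.card_univ,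
        ZMod.card, nsmul_eq_mul, mul_one]
      push_cast; ring
    rw [hsum] at hkeyw
    rw [hsum 1] at hkey1
    have hpm : ((p:ℂ))^m = (p:ℂ)^(m/2) * (p:ℂ)^(m/2) := by rw [← pow_add]; congr 1; omega
    have hSw : ∑ x : ZMod (p^m), χ ((w : ZMod (p ^ m)) + x^2) = χ w * (p:ℂ)^(m/2) := by
      apply mul_left_cancel₀ hpK
      rw [hkeyw, hpm]; ring
    have hS1 : ∑ x : ZMod (p^m), χ (1 + x^2) = (p:ℂ)^(m/2) := by
      apply mul_left_cancel₀ hpK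
      rw [hkey1, hpm]
    have hQm : ((quadraticChar (ZMod p) (pr p m hm (w : ZMod (p ^ m))) : ℤ))^m = 1 := by
      have h2 : ((quadraticChar (ZMod p) (pr p m hm (w : ZMod (p ^ m))) : ℤ))^(2*(m/2)) = 1 := by
        rw [pow_mul, hQsq, one_pow]
      rwa [← hm2K] at h2
    have hQmC : (((quadraticChar (ZMod p) (pr p m hm (w : ZMod (p ^ m))) : ℤ)):ℂ)^m = 1 := by
      exact_mod_cast congrArg (Int.cast : ℤ → ℂ) hQm
    rw [hSw, hS1, hQmC]; ring
  · -- odd case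
    have hm2K : m = 2*(m/2) + 1 := by omega
    have hform : ∀ u : ZMod (p^m),
        ∑ x : ZMod (p^m), χ (1 + (p : ZMod (p ^ m))^(2*(m/2)) * u * x^2)
          = (p:ℂ)^(m-1) * ∑ t : ZMod p, psi hm χ (pr p m hm u * t^2) := by
      intro u
      have harg : ∀ x : ZMod (p^m), χ (1 + (p : ZMod (p ^ m))^(2*(m/2)) * u * x^2)
          = psi hm χ (pr p m hm u * (pr p m hm x)^2) := by
        intro x
        rw [show ((p : ZMod (p ^ m)))^(2*(m/2)) = ((p : ZMod (p ^ m)))^(m-1) from by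
          congr 1; omega]
        rw [mul_assoc, chi_one_add hm χ, map_mul, map_pow]
      rw [Finset.sum_congr rfl (fun x _ => harg x)]
      exact sum_pr hm (fun t => psi hm χ (pr p m hm u * t^2))
    have hGt_w : ∑ t : ZMod p, psi hm χ (pr p m hm ((w⁻¹ : (ZMod (p ^ m))ˣ) : ZMod (p ^ m)) * t^2)
        = ((quadraticChar (ZMod p) (pr p m hm (w : ZMod (p ^ m))) : ℤ):ℂ)
            * ∑ t : ZMod p, psi hm χ (t^2) := by
      have hv0 : pr p m hm ((w⁻¹ : (ZMod (p ^ m))ˣ) : ZMod (p ^ m)) ≠ 0 :=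
        (isUnit_iff hm _).mp (Units.isUnit w⁻¹)
      rw [gauss_twist hψ hodd _ hv0, hQv]
    rw [hform, hGt_w] at hkeyw
    rw [hform 1, map_one] at hkey1
    have hGt_1 : ∑ t : ZMod p, psi hm χ ((1 : ZMod p) * t^2)
        = ∑ t : ZMod p, psi hm χ (t^2) :=
      Finset.sum_congr rfl fun t _ => by rw [one_mul]
    rw [hGt_1] at hkey1
    have hpm1 : ((p:ℂ))^(m-1) = (p:ℂ)^(m/2) * (p:ℂ)^(m/2) := by rw [← pow_add]; congr 1; omega
    have hSw : ∑ x : ZMod (p^m), χ ((w : ZMod (p ^ m)) + x^2)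
        = χ w * (((quadraticChar (ZMod p) (pr p m hm (w : ZMod (p ^ m))) : ℤ):ℂ)
            * ((p:ℂ)^(m/2) * ∑ t : ZMod p, psi hm χ (t^2))) := by
      apply mul_left_cancel₀ hpK
      rw [hkeyw, hpm1]; ring
    have hS1 : ∑ x : ZMod (p^m), χ (1 + x^2)
        = (p:ℂ)^(m/2) * ∑ t : ZMod p, psi hm χ (t^2) := by
      apply mul_left_cancel₀ hpK
      rw [hkey1, hpm1]; ring
    have hQm : ((quadraticChar (ZMod p) (pr p m hm (w : ZMod (p ^ m))) : ℤ))^m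
        = (quadraticChar (ZMod p) (pr p m hm (w : ZMod (p ^ m))) : ℤ) := by
      have h2 : ((quadraticChar (ZMod p) (pr p m hm (w : ZMod (p ^ m))) : ℤ))^(2*(m/2)+1)
          = (quadraticChar (ZMod p) (pr p m hm (w : ZMod (p ^ m))) : ℤ) := by
        rw [pow_succ, pow_mul, hQsq, one_pow, one_mul]
      rwa [← hm2K] at h2
    have hQmC : (((quadraticChar (ZMod p) (pr p m hm (w : ZMod (p ^ m))) : ℤ)):ℂ)^m
        = ((quadraticChar (ZMod p) (pr p m hm (w : ZMod (p ^ m))) : ℤ):ℂ) := by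
      exact_mod_cast congrArg (Int.cast : ℤ → ℂ) hQm
    rw [hSw, hS1, hQmC]; ring

end CharSumAux

/-- for a unit `u`,
`∑_x χ(u + x²) = χ(u)·χ_{1/2}(u)^m·α̃(χ,m)`, with `α̃(χ,m) = ∑_x χ(1 + x²)`. -/
theorem charSum_quadratic_unit_shift
    (p m : ℕ) [Fact p.Prime] (hodd : p ≠ 2) (hm : 1 < m)
    (χ : MulChar (ZMod (p ^ m)) ℂ) (hχ : MulPrimitive p m χ)
    (u : ZMod (p ^ m)) (hu : IsUnit u) :
    ∑ x : ZMod (p ^ m), χ (u + x ^ 2) =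
      χ u *
        ((legendreSym p
          ((ZMod.castHom (dvd_pow_self p (by omega : m ≠ 0)) (ZMod p) u).val) : ℂ)) ^ m *
        ∑ x : ZMod (p ^ m), χ (1 + x ^ 2) := by
  haveI : NeZero p := ⟨(Fact.out : p.Prime).ne_zero⟩
  have hm2 : 2 ≤ m := hm
  obtain ⟨w, rfl⟩ := hu
  have h := CharSumAux.main hm2 χ hχ hodd w
  have hleg : ((legendreSym p
        (((ZMod.castHom (dvd_pow_self p (by omega : m ≠ 0)) (ZMod p))
          ((w : ZMod (p^m)))).val)) : ℂ)
      = ((quadraticChar (ZMod p) (CharSumAux.pr p m hm2 ((w : ZMod (p^m)))) : ℤ) : ℂ) := by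
    have h2 : (((((ZMod.castHom (dvd_pow_self p (by omega : m ≠ 0)) (ZMod p))
        ((w : ZMod (p^m)))).val : ℕ) : ℤ) : ZMod p)
        = CharSumAux.pr p m hm2 ((w : ZMod (p^m))) := by
      push_cast
      rw [ZMod.natCast_zmod_val]
      rfl
    have h1 : legendreSym p
        ((((ZMod.castHom (dvd_pow_self p (by omega : m ≠ 0)) (ZMod p))
          ((w : ZMod (p^m)))).val : ℕ))
        = quadraticChar (ZMod p) (CharSumAux.pr p m hm2 ((w : ZMod (p^m)))) := by
      rw [← h2]
      rfl
    exact_mod_cast congrArg (Int.cast : ℤ → ℂ) h1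
  rw [hleg]
  exact h
end

section
/- Let p be an odd prime, m > 1, χ a primitive multiplicative character mod p^m extended by zero, and a₁,…,a_n ∈ ℤ_p^× units with f(x) = u + Σ a_i x_i² for a unit u. Then the sum of χ(f(x)) over x ∈ (pℤ_p/p^mℤ_p)^n (i.e. over x ≡ 0 mod p) equals the full sum over x ∈ (ℤ/p^mℤ)^n of χ(f(x)). -/
section Aux
variable {p k : ℕ} [hp : Fact p.Prime]

lemma dvd_iff_dvd_val (hk : k ≠ 0) (x : ZMod (p^k)) : (p : ZMod (p^k)) ∣ x ↔ p ∣ x.val := by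
  haveI : NeZero (p^k) := ⟨pow_ne_zero k hp.out.ne_zero⟩
  constructor
  · rintro ⟨y, rfl⟩
    have h1 : (ZMod.castHom (dvd_pow_self p hk) (ZMod p)) ((p : ZMod (p^k)) * y) = 0 := by
      rw [map_mul, map_natCast, ZMod.natCast_self, zero_mul]
    rw [ZMod.castHom_apply, ← ZMod.natCast_val, ZMod.natCast_eq_zero_iff] at h1
    exact h1
  · intro ⟨c, hc⟩
    refine ⟨(c : ZMod (p^k)), ?_⟩
    conv_lhs => rw [← ZMod.natCast_zmod_val x]
    rw [hc]; push_cast; ring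

lemma isUnit_iff_not_dvd (hk : k ≠ 0) (x : ZMod (p^k)) :
    IsUnit x ↔ ¬ (p : ZMod (p^k)) ∣ x := by
  haveI : NeZero (p^k) := ⟨pow_ne_zero k hp.out.ne_zero⟩
  rw [dvd_iff_dvd_val hk, ← Nat.Prime.coprime_iff_not_dvd hp.out, Nat.coprime_comm]
  constructor
  · intro h
    rw [← ZMod.natCast_zmod_val x, ZMod.isUnit_iff_coprime] at h
    exact (Nat.coprime_pow_right_iff (Nat.pos_of_ne_zero hk) _ _).mp h
  · intro h
    rw [← ZMod.natCast_zmod_val x, ZMod.isUnit_iff_coprime]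
    exact Nat.Coprime.pow_right k h
end Aux

set_option linter.unusedSectionVars false
section NLem
variable {p m : ℕ} [hp : Fact p.Prime]

local notation "q" => p ^ m
local notation "N" => (p : ZMod (p^m))^(m-1)

lemma hNp0 (hm : 1 < m) : N * (p : ZMod q) = 0 := by
  have : (m - 1) + 1 = m := by omega
  rw [← pow_succ, this, ← Nat.cast_pow, ZMod.natCast_self]

lemma hNN (hm : 1 < m) : N * N = 0 := by
  have h : (m-1) + (m-1) = m + (m-2) := by omega
  rw [← pow_add, h, pow_add, ← Nat.cast_pow, ZMod.natCast_self, zero_mul]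

lemma Nred (hm : 1 < m) (k : ℕ) : N * (k : ZMod q) = N * ((k % p : ℕ) : ZMod q) := by
  conv_lhs => rw [← Nat.mod_add_div k p]
  push_cast
  linear_combination ((k / p : ℕ) : ZMod (p^m)) * hNp0 (p := p) hm

lemma Nnu_add (hm : 1 < m) (s t : ZMod p) :
    N * ((s.val : ℕ) : ZMod q) + N * ((t.val : ℕ) : ZMod q)
      = N * (((s+t).val : ℕ) : ZMod q) := by
  rw [ZMod.val_add, ← Nred hm, Nat.cast_add, mul_add]

lemma Nmulred (hm : 1 < m) (z : ZMod q) :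
    N * z = N * ((((ZMod.castHom (dvd_pow_self p (by omega : m ≠ 0)) (ZMod p)) z).val : ℕ) : ZMod q) := by
  conv_lhs => rw [← ZMod.natCast_zmod_val z]
  rw [ZMod.castHom_apply, ← ZMod.natCast_val, ZMod.val_natCast, ← Nred hm]

end NLem

lemma sum_eq_zero_of_hom_nontrivial {G : Type*} [AddCommGroup G] [Fintype G]
    (g : G → ℂ) (hmul : ∀ s t, g (s + t) = g s * g t) (hs : ∃ s, g s ≠ 1) :
    ∑ t, g t = 0 := by
  obtain ⟨s, hs⟩ := hs
  have h1 : g s * ∑ t, g t = ∑ t, g t := by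
    rw [Finset.mul_sum]
    simp_rw [← hmul]
    exact Fintype.sum_bijective (s + ·) (Equiv.addLeft s).bijective _ _ (fun t => rfl)
  by_contra h
  exact hs (mul_right_cancel₀ h (h1.trans (one_mul _).symm))

lemma exists_N_ne_one (p m : ℕ) [hp : Fact p.Prime] (hm : 1 < m)
    (χ : MulChar (ZMod (p ^ m)) ℂ) (hχ : MulPrimitive p m χ) :
    ∃ s : ZMod (p ^ m), χ (1 + (p : ZMod (p^m))^(m-1) * s) ≠ 1 := by
  by_contra hcon
  push_neg at hcon
  haveI : NeZero (p^m) := ⟨pow_ne_zero m hp.out.ne_zero⟩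
  have hjm : m - 1 < m := by omega
  have hdvd : p ^ (m-1) ∣ p ^ m := pow_dvd_pow p hjm.le
  have hsurj := ZMod.unitsMap_surjective (n := p^(m-1)) hdvd
  set π := ZMod.unitsMap hdvd with hπ
  have hker : π.ker ≤ (MulChar.equivToUnitHom χ).ker := by
    intro v hv
    rw [MonoidHom.mem_ker] at hv ⊢
    have hv1 : (ZMod.castHom hdvd (ZMod (p^(m-1)))) (v : ZMod (p^m)) = 1 := by
      have := congrArg (Units.val) hv
      simpa [hπ, ZMod.unitsMap] using this
    have h0 : (ZMod.castHom hdvd (ZMod (p^(m-1)))) ((v : ZMod (p^m)) - 1) = 0 := by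
      rw [map_sub, hv1, map_one, sub_self]
    have h2 : p ^ (m-1) ∣ ((v : ZMod (p^m)) - 1).val := by
      rwa [ZMod.castHom_apply, ← ZMod.natCast_val, ZMod.natCast_eq_zero_iff] at h0
    obtain ⟨c, hc⟩ := h2
    have h3 : ((v : ZMod (p^m)) - 1) = (p : ZMod (p^m))^(m-1) * (c : ZMod (p^m)) := by
      conv_lhs => rw [← ZMod.natCast_zmod_val ((v : ZMod (p^m)) - 1)]
      rw [hc]; push_cast; ring
    have hv2 : (v : ZMod (p^m)) = 1 + (p : ZMod (p^m))^(m-1) * (c : ZMod (p^m)) := by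
      linear_combination h3
    rw [Units.ext_iff, Units.val_one, MulChar.coe_equivToUnitHom, hv2]
    exact hcon _
  let χ₁u : (ZMod (p^(m-1)))ˣ →* ℂˣ :=
    (MonoidHom.liftOfSurjective π hsurj) ⟨MulChar.equivToUnitHom χ, hker⟩
  obtain ⟨a, hane⟩ := hχ (m-1) hjm (MulChar.ofUnitHom χ₁u)
  apply hane
  have hcasteq : ZMod.castHom (pow_dvd_pow p hjm.le) (ZMod (p ^ (m-1)))
      = ZMod.castHom hdvd (ZMod (p^(m-1))) := rfl
  rw [hcasteq]
  by_cases hua : IsUnit a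
  · lift a to (ZMod (p^m))ˣ using hua
    have h1 : (ZMod.castHom hdvd (ZMod (p^(m-1)))) (a : ZMod (p^m))
        = ((π a : (ZMod (p^(m-1)))ˣ) : ZMod (p^(m-1))) := rfl
    rw [h1, MulChar.ofUnitHom_coe]
    have h2 : χ₁u (π a) = MulChar.equivToUnitHom χ a :=
      MonoidHom.liftOfRightInverse_comp_apply _ _ _ _ a
    rw [h2, MulChar.coe_equivToUnitHom]
  · rw [χ.map_nonunit hua, MulChar.map_nonunit _ ?_]
    intro hcu
    apply hua
    have hmm : (m-1) ≠ 0 := by omega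
    rw [isUnit_iff_not_dvd hmm, dvd_iff_dvd_val hmm] at hcu
    rw [isUnit_iff_not_dvd (show m ≠ 0 by omega), dvd_iff_dvd_val (show m ≠ 0 by omega)]
    intro hdvd2
    apply hcu
    rw [ZMod.castHom_apply, ← ZMod.natCast_val, ZMod.val_natCast]
    exact (Nat.dvd_mod_iff (dvd_pow_self p hmm)).mpr hdvd2

lemma inner_sum_zero (p m : ℕ) [hp : Fact p.Prime] (hm : 1 < m)
    (χ : MulChar (ZMod (p ^ m)) ℂ)
    (hne : ∃ s : ZMod (p^m), χ (1 + (p : ZMod (p^m))^(m-1) * s) ≠ 1)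
    (y c : ZMod (p^m)) (hc : IsUnit c) :
    ∑ t : ZMod p, χ (y + c * ((p : ZMod (p^m))^(m-1) * ((t.val : ℕ) : ZMod (p^m)))) = 0 := by
  have hm0 : m ≠ 0 := by omega
  have hm1 : m - 1 ≠ 0 := by omega
  set N : ZMod (p^m) := (p : ZMod (p^m))^(m-1) with hN
  set ν : ZMod p → ZMod (p^m) := fun t => ((t.val : ℕ) : ZMod (p^m)) with hν
  set g : ZMod p → ℂ := fun s => χ (1 + N * ν s) with hg
  have hgmul : ∀ s t, g (s + t) = g s * g t := by
    intro s t
    have key : (1 + N * ν s) * (1 + N * ν t) = 1 + N * ν (s + t) := by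
      have h1 := Nnu_add (p := p) hm s t
      have h2 := hNN (p := p) hm
      simp only [hν]
      linear_combination h1 + ((s.val : ZMod (p^m)) * (t.val : ZMod (p^m))) * h2
    rw [hg]
    simp only
    rw [← key, map_mul]
  have hgne : ∃ s, g s ≠ 1 := by
    obtain ⟨s₀, hs₀⟩ := hne
    refine ⟨(ZMod.castHom (dvd_pow_self p hm0) (ZMod p)) s₀, ?_⟩
    rw [hg]
    simp only
    rw [hν]
    simp only
    rw [← Nmulred hm s₀]
    exact hs₀
  have hgsum : ∑ s, g s = 0 := sum_eq_zero_of_hom_nontrivial g hgmul hgne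
  by_cases hy : IsUnit y
  · obtain ⟨yu, rfl⟩ := hy
    set d : ZMod (p^m) := ((yu⁻¹ : (ZMod (p^m))ˣ) : ZMod (p^m)) * c with hd
    have hdu : IsUnit d := (Units.isUnit _).mul hc
    set e : ZMod p := (ZMod.castHom (dvd_pow_self p hm0) (ZMod p)) d with he
    have heu : IsUnit e := hdu.map _
    have he0 : e ≠ 0 := heu.ne_zero
    have hterm : ∀ t : ZMod p,
        χ ((yu : ZMod (p^m)) + c * (N * ν t)) = χ (yu : ZMod (p^m)) * g (e * t) := by
      intro t
      have hfac : (yu : ZMod (p^m)) + c * (N * ν t)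
          = (yu : ZMod (p^m)) * (1 + N * ν (e * t)) := by
        have hred : N * (d * ν t) = N * ν (e * t) := by
          rw [Nmulred (p := p) hm (d * ν t), map_mul]
          congr 2
          have : (ZMod.castHom (dvd_pow_self p hm0) (ZMod p)) (ν t) = t := by
            rw [hν]
            simp only
            rw [map_natCast, ZMod.natCast_zmod_val]
          rw [this, he]
        have hy1 : (yu : ZMod (p^m)) * ((yu⁻¹ : (ZMod (p^m))ˣ) : ZMod (p^m)) = 1 :=
          yu.mul_inv
        calc (yu : ZMod (p^m)) + c * (N * ν t)
            = (yu : ZMod (p^m)) * (1 + N * (d * ν t)) := by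
              rw [hd]
              linear_combination (-(c * (N * ν t))) * hy1
          _ = (yu : ZMod (p^m)) * (1 + N * ν (e * t)) := by rw [hred]
      rw [hfac, map_mul]
    calc ∑ t : ZMod p, χ ((yu : ZMod (p^m)) + c * (N * ν t))
        = ∑ t : ZMod p, χ (yu : ZMod (p^m)) * g (e * t) := by
          exact Finset.sum_congr rfl (fun t _ => hterm t)
      _ = χ (yu : ZMod (p^m)) * ∑ t : ZMod p, g (e * t) := by rw [Finset.mul_sum]
      _ = χ (yu : ZMod (p^m)) * ∑ s : ZMod p, g s := by
          congr 1
          exact Fintype.sum_bijective (e * ·) (Equiv.mulLeft₀ e he0).bijective _ _ (fun t => rfl)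
      _ = 0 := by rw [hgsum, mul_zero]
  · apply Finset.sum_eq_zero
    intro t _
    apply χ.map_nonunit
    rw [isUnit_iff_not_dvd hm0]
    rw [isUnit_iff_not_dvd hm0] at hy
    push_neg at hy
    push_neg
    exact dvd_add hy (Dvd.dvd.mul_left
      (Dvd.dvd.mul_right (dvd_pow_self (p : ZMod (p^m)) hm1) (ν t)) c)

open scoped Classical in
noncomputable def badIdx (q p : ℕ) {n : ℕ} [NeZero n] (x : Fin n → ZMod q) : Fin n :=
  if h : (Finset.univ.filter (fun i => ¬ (p : ZMod q) ∣ x i)).Nonempty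
  then (Finset.univ.filter (fun i => ¬ (p : ZMod q) ∣ x i)).min' h
  else default

open scoped Classical in
lemma badIdx_spec (q p : ℕ) {n : ℕ} [NeZero n] (x : Fin n → ZMod q)
    (h : ∃ i, ¬ (p : ZMod q) ∣ x i) : ¬ (p : ZMod q) ∣ x (badIdx q p x) := by
  obtain ⟨i, hi⟩ := h
  have hne : (Finset.univ.filter (fun i => ¬ (p : ZMod q) ∣ x i)).Nonempty :=
    ⟨i, Finset.mem_filter.mpr ⟨Finset.mem_univ i, hi⟩⟩
  rw [badIdx, dif_pos hne]
  exact (Finset.mem_filter.mp (Finset.min'_mem _ hne)).2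

open scoped Classical in
lemma badIdx_congr (q p : ℕ) {n : ℕ} [NeZero n] (x y : Fin n → ZMod q)
    (h : ∀ i, ((p : ZMod q) ∣ x i ↔ (p : ZMod q) ∣ y i)) : badIdx q p x = badIdx q p y := by
  have hset : (Finset.univ.filter (fun i => ¬ (p : ZMod q) ∣ x i))
      = (Finset.univ.filter (fun i => ¬ (p : ZMod q) ∣ y i)) := by
    apply Finset.filter_congr
    intro i _
    simp [h i]
  rw [badIdx, badIdx]
  simp_rw [hset]

noncomputable def tauF (q p : ℕ) {n : ℕ} [NeZero n] (w : ZMod q) (x : Fin n → ZMod q) :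
    Fin n → ZMod q :=
  Function.update x (badIdx q p x) (x (badIdx q p x) + w)

lemma tauF_dvd_iff (q p : ℕ) {n : ℕ} [NeZero n] (w : ZMod q) (hw : (p : ZMod q) ∣ w)
    (x : Fin n → ZMod q) (j : Fin n) :
    (p : ZMod q) ∣ tauF q p w x j ↔ (p : ZMod q) ∣ x j := by
  rcases eq_or_ne j (badIdx q p x) with rfl | hne
  · rw [tauF, Function.update_self]
    constructor
    · intro h
      have := dvd_sub h hw
      simpa using this
    · intro h
      exact dvd_add h hw
  · rw [tauF, Function.update_of_ne hne]

lemma badIdx_tauF (q p : ℕ) {n : ℕ} [NeZero n] (w : ZMod q) (hw : (p : ZMod q) ∣ w)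
    (x : Fin n → ZMod q) : badIdx q p (tauF q p w x) = badIdx q p x :=
  badIdx_congr q p _ _ (fun j => tauF_dvd_iff q p w hw x j)

lemma tauF_tauF (q p : ℕ) {n : ℕ} [NeZero n] (w w' : ZMod q) (hw : (p : ZMod q) ∣ w)
    (hww' : w + w' = 0) (x : Fin n → ZMod q) : tauF q p w' (tauF q p w x) = x := by
  have hb := badIdx_tauF q p w hw x
  have h1 : (tauF q p w x) (badIdx q p x) = x (badIdx q p x) + w := by
    rw [tauF, Function.update_self]
  rw [show tauF q p w' (tauF q p w x)
      = Function.update (tauF q p w x) (badIdx q p x) ((tauF q p w x) (badIdx q p x) + w') from by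
    rw [tauF, hb]]
  rw [h1]
  rw [show tauF q p w x = Function.update x (badIdx q p x) (x (badIdx q p x) + w) from rfl]
  rw [Function.update_idem]
  rw [show x (badIdx q p x) + w + w' = x (badIdx q p x) by rw [add_assoc, hww', add_zero]]
  exact Function.update_eq_self _ x

lemma tauF_def (q p : ℕ) {n : ℕ} [NeZero n] (w : ZMod q) (x : Fin n → ZMod q) :
    tauF q p w x = Function.update x (badIdx q p x) (x (badIdx q p x) + w) := rfl

open scoped Classical in
/-- for `f = u + ∑ aᵢxᵢ²` with `u, aᵢ ∈ ℤ_p` units, the character sum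
of `χ(f)` over the residue disc `x ≡ 0 mod p` equals the full sum over
`(ℤ/p^mℤ)^n`. -/
theorem charSum_disc_eq_full_for_diagonal
    (p m n : ℕ) [Fact p.Prime] (hodd : p ≠ 2) (hm : 1 < m)
    (χ : MulChar (ZMod (p ^ m)) ℂ) (hχ : MulPrimitive p m χ)
    (u : ℤ_[p]) (hu : IsUnit u) (a : Fin n → ℤ_[p]) (ha : ∀ i, IsUnit (a i)) :
    ∑ x ∈ Finset.univ.filter
        (fun x : Fin n → ZMod (p ^ m) => ∀ i, (p : ZMod (p ^ m)) ∣ x i),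
      χ (PadicInt.toZModPow m u + ∑ i, PadicInt.toZModPow m (a i) * (x i) ^ 2) =
    ∑ x : Fin n → ZMod (p ^ m),
      χ (PadicInt.toZModPow m u + ∑ i, PadicInt.toZModPow m (a i) * (x i) ^ 2) := by
  have hp : Fact p.Prime := inferInstance
  haveI : NeZero p := ⟨hp.out.ne_zero⟩
  haveI : NeZero (p^m) := ⟨pow_ne_zero m hp.out.ne_zero⟩
  have hm0 : m ≠ 0 := by omega
  have hm1 : m - 1 ≠ 0 := by omega
  suffices hbad : ∑ x ∈ Finset.univ.filter
      (fun x : Fin n → ZMod (p ^ m) => ¬ ∀ i, (p : ZMod (p ^ m)) ∣ x i),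
      χ (PadicInt.toZModPow m u + ∑ i, PadicInt.toZModPow m (a i) * (x i) ^ 2) = 0 by
    rw [← Finset.sum_filter_add_sum_filter_not Finset.univ
      (fun x : Fin n → ZMod (p ^ m) => ∀ i, (p : ZMod (p ^ m)) ∣ x i)
      (fun x => χ (PadicInt.toZModPow m u + ∑ i, PadicInt.toZModPow m (a i) * (x i) ^ 2)),
      hbad, add_zero]
  rcases Nat.eq_zero_or_pos n with hn | hn
  · subst hn
    apply Finset.sum_eq_zero
    intro x hx
    rw [Finset.mem_filter] at hx
    exact absurd (fun i => i.elim0) hx.2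
  haveI : NeZero n := ⟨hn.ne'⟩
  set N : ZMod (p^m) := (p : ZMod (p^m))^(m-1) with hN
  set ν : ZMod p → ZMod (p^m) := fun t => ((t.val : ℕ) : ZMod (p^m)) with hν
  have hNdvd : ∀ t : ZMod p, (p : ZMod (p^m)) ∣ N * ν t :=
    fun t => Dvd.dvd.mul_right (dvd_pow_self _ hm1) _
  set F : (Fin n → ZMod (p^m)) → ℂ :=
    fun x => χ (PadicInt.toZModPow m u + ∑ i, PadicInt.toZModPow m (a i) * (x i) ^ 2) with hF
  set Bad := Finset.univ.filter
      (fun x : Fin n → ZMod (p^m) => ¬ ∀ i, (p : ZMod (p^m)) ∣ x i) with hBad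
  show ∑ x ∈ Bad, F x = 0
  have hmem : ∀ x, x ∈ Bad ↔ ∃ i, ¬ (p : ZMod (p^m)) ∣ x i := by
    intro x
    rw [hBad, Finset.mem_filter]
    simp [not_forall]
  have hτmem : ∀ (t : ZMod p) (x : Fin n → ZMod (p^m)), x ∈ Bad → tauF (p^m) p (N * ν t) x ∈ Bad := by
    intro t x hx
    rw [hmem] at hx ⊢
    obtain ⟨i, hi⟩ := hx
    exact ⟨i, fun hcon => hi ((tauF_dvd_iff (p^m) p _ (hNdvd t) x i).mp hcon)⟩
  have hww : ∀ t : ZMod p, N * ν t + N * ν (-t) = 0 := by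
    intro t
    rw [hν]
    simp only
    rw [Nnu_add (p := p) hm t (-t), add_neg_cancel, ZMod.val_zero, Nat.cast_zero, mul_zero]
  have hrep : ∀ t : ZMod p, ∑ x ∈ Bad, F (tauF (p^m) p (N * ν t) x) = ∑ x ∈ Bad, F x := by
    intro t
    exact Finset.sum_nbij' (tauF (p^m) p (N * ν t)) (tauF (p^m) p (N * ν (-t)))
      (fun x hx => hτmem t x hx) (fun x hx => hτmem (-t) x hx)
      (fun x _ => tauF_tauF (p^m) p _ _ (hNdvd t) (hww t) x)
      (fun x _ => by
        have := tauF_tauF (p^m) p (N * ν (-t)) (N * ν t) (hNdvd (-t)) ?_ x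
        · exact this
        · rw [← hww t]; ring)
      (fun x _ => rfl)
  have hinner : ∀ x ∈ Bad, ∑ t : ZMod p, F (tauF (p^m) p (N * ν t) x) = 0 := by
    intro x hx
    set i := badIdx (p^m) p x with hi
    have hxi : ¬ (p : ZMod (p^m)) ∣ x i := badIdx_spec (p^m) p x ((hmem x).mp hx)
    set A : Fin n → ZMod (p^m) := fun j => PadicInt.toZModPow m (a j) with hA
    set U : ZMod (p^m) := PadicInt.toZModPow m u with hU
    have hdecomp : ∀ b : ZMod (p^m),
        ∑ j, A j * (Function.update x i b j)^2
          = A i * b^2 + ∑ j ∈ Finset.univ.erase i, A j * (x j)^2 := by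
      intro b
      rw [← Finset.add_sum_erase _ _ (Finset.mem_univ i), Function.update_self]
      congr 1
      apply Finset.sum_congr rfl
      intro j hj
      rw [Function.update_of_ne (Finset.ne_of_mem_erase hj)]
    have harg : ∀ t : ZMod p,
        U + ∑ j, A j * (tauF (p^m) p (N * ν t) x j)^2
          = (U + ∑ j, A j * (x j)^2) + (2 * A i * x i) * (N * ν t) := by
      intro t
      rw [tauF_def, ← hi, hdecomp]
      have hx2 : ∑ j, A j * (x j)^2 = A i * (x i)^2 + ∑ j ∈ Finset.univ.erase i, A j * (x j)^2 := by
        rw [← Finset.add_sum_erase _ _ (Finset.mem_univ i)]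
      rw [hx2]
      have hw2 : (N * ν t) * (N * ν t) = 0 := by
        rw [hN, hν]
        simp only
        linear_combination ((t.val : ZMod (p^m)) * (t.val : ZMod (p^m))) * hNN (p := p) hm
      linear_combination (A i) * hw2
    have hAu : IsUnit (A i) := (ha i).map (PadicInt.toZModPow m)
    have h2u : IsUnit (2 : ZMod (p^m)) := by
      rw [isUnit_iff_not_dvd hm0]
      intro hdvd2
      rw [show (2 : ZMod (p^m)) = ((2 : ℕ) : ZMod (p^m)) by push_cast; ring, dvd_iff_dvd_val hm0,
        ZMod.val_natCast] at hdvd2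
      have hlt : 2 < p ^ m := by
        calc 2 < p := by have := hp.out.two_le; omega
          _ ≤ p ^ m := Nat.le_self_pow hm0 p
      rw [Nat.mod_eq_of_lt hlt] at hdvd2
      have := Nat.le_of_dvd (by norm_num) hdvd2
      have := hp.out.two_le
      omega
    have hxiu : IsUnit (x i) := by
      rw [isUnit_iff_not_dvd hm0]
      exact hxi
    have hcu : IsUnit (2 * A i * x i) := (h2u.mul hAu).mul hxiu
    calc ∑ t : ZMod p, F (tauF (p^m) p (N * ν t) x)
        = ∑ t : ZMod p, χ ((U + ∑ j, A j * (x j)^2) + (2 * A i * x i) * (N * ν t)) := by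
          apply Finset.sum_congr rfl
          intro t _
          exact congrArg χ (harg t)
      _ = 0 := inner_sum_zero p m hm χ (exists_N_ne_one p m hm χ hχ) _ _ hcu
  have hfinal : (p : ℂ) * (∑ x ∈ Bad, F x) = 0 := by
    calc (p : ℂ) * (∑ x ∈ Bad, F x)
        = ∑ t : ZMod p, ∑ x ∈ Bad, F (tauF (p^m) p (N * ν t) x) := by
          rw [Finset.sum_congr rfl (fun t (_ : t ∈ Finset.univ) => hrep t), Finset.sum_const,
            Finset.card_univ, ZMod.card, nsmul_eq_mul]
      _ = ∑ x ∈ Bad, ∑ t : ZMod p, F (tauF (p^m) p (N * ν t) x) := Finset.sum_comm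
      _ = 0 := Finset.sum_eq_zero hinner
  have hpne : (p : ℂ) ≠ 0 := Nat.cast_ne_zero.mpr hp.out.ne_zero
  exact (mul_eq_zero.mp hfinal).resolve_left hpne
end
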